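/- Let P be a non-trivial product distribution on {0,1}^n (independent coordinates with 0 < p_j = Pr[z_j = 1] < 1 for all j). For each ℓ ∈ {0,1,...,n}, let P_ℓ be the distribution of z ∼ P conditioned on |z| = ℓ, viewed as a distribution on subsets of [n] of size ℓ. Then there exists a probability distribution on maximal chains ∅ = c_0 ⊂ c_1 ⊂ ... ⊂ c_n = [n] of subsets of [n] (with |c_ℓ| = ℓ for each ℓ) such that for every ℓ ∈ {0,1,...,n}, the random set c_ℓ is distributed according to P_ℓ. -/

import Mathlib

/-!
A random ordering of `Fin n` yields a random maximal chain, namely its initial segments, so it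
suffices to find a law on orderings whose first `ℓ` elements are distributed as `P_ℓ` for every
`ℓ`. We build it by induction on `n`. Under `P_ℓ` the element `0` is absent with probability
`q_ℓ = (1 - p₀) Pr'[|z'| = ℓ] / Pr[|z| = ℓ]`, where `'` refers to the remaining coordinates, and
conditionally on absence (presence) the rest is distributed as `P'_ℓ` (`P'_{ℓ-1}`). Hence inserting
`0` into an ordering of the remaining elements at an independent position `k` with
`Pr[k ≥ ℓ] = q_ℓ` does the job, provided `q` is antitone. Through the recursion
`Pr[|z| = ℓ] = (1 - p₀) Pr'[|z'| = ℓ] + p₀ Pr'[|z'| = ℓ - 1]` this is the log-concavity of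
`ℓ ↦ Pr'[|z'| = ℓ]` (Newton's inequality), and the same recursion shows that log-concavity
propagates from `n` to `n + 1`.
-/

open Finset

/-- The probability that a sample from the product distribution on `{0,1}^n`
with parameters `p` equals the indicator vector of the set `s ⊆ [n]`. -/
def prodWeight {n : ℕ} (p : Fin n → ℝ) (s : Finset (Fin n)) : ℝ :=
  (∏ j ∈ s, p j) * ∏ j ∈ sᶜ, (1 - p j)

/-- The conditioned measure `P_ℓ`: the probability, under the product distribution
with parameters `p` conditioned on `|z| = ℓ`, of the set `s` (it is `0` unless
`|s| = ℓ`). -/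
noncomputable def condWeight {n : ℕ} (p : Fin n → ℝ) (ℓ : ℕ) (s : Finset (Fin n)) : ℝ :=
  (if s.card = ℓ then prodWeight p s else 0) /
    ∑ u ∈ Finset.univ.filter (fun u : Finset (Fin n) => u.card = ℓ), prodWeight p u

section Pushforward

variable {α β : Type*} [Fintype α] [DecidableEq β]

def pushforward (f : α → β) (w : α → ℝ) (b : β) : ℝ :=
  ∑ a ∈ univ.filter (fun a => f a = b), w a

theorem sum_pushforward_mul [Fintype β] (f : α → β) (w : α → ℝ) (h : β → ℝ) :
    ∑ b, pushforward f w b * h b = ∑ a, w a * h (f a) := by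
  rw [← Finset.sum_fiberwise univ f (fun a => w a * h (f a))]
  refine sum_congr rfl fun b _ => ?_
  rw [pushforward, sum_mul]
  exact sum_congr rfl fun a ha => by rw [(mem_filter.1 ha).2]

theorem pushforward_nonneg {f : α → β} {w : α → ℝ} (hw : ∀ a, 0 ≤ w a) (b : β) :
    0 ≤ pushforward f w b :=
  sum_nonneg fun a _ => hw a

theorem exists_of_pushforward_ne_zero {f : α → β} {w : α → ℝ} {b : β}
    (h : pushforward f w b ≠ 0) : ∃ a, f a = b ∧ w a ≠ 0 := by
  obtain ⟨a, ha, hne⟩ := exists_ne_zero_of_sum_ne_zero h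
  exact ⟨a, (mem_filter.1 ha).2, hne⟩

end Pushforward

theorem sum_powerset_map {α β M : Type*} [AddCommMonoid M] (e : α ↪ β) (s : Finset α)
    (f : Finset β → M) : ∑ t ∈ (s.map e).powerset, f t = ∑ t ∈ s.powerset, f (t.map e) := by
  refine (sum_bij (fun t _ => t.map e) (by simp) (fun _ _ _ _ => map_inj.1) ?_
    fun _ _ => rfl).symm
  intro t ht
  obtain ⟨u, hu, rfl⟩ := subset_map_iff.1 (mem_powerset.1 ht)
  exact ⟨u, mem_powerset.2 hu, rfl⟩

theorem sum_finset_fin_succ {M : Type*} [AddCommMonoid M] {n : ℕ}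
    (f : Finset (Fin (n + 1)) → M) :
    ∑ s, f s = ∑ s : Finset (Fin n), f (s.map (Fin.succEmb n))
      + ∑ s : Finset (Fin n), f (insert 0 (s.map (Fin.succEmb n))) := by
  rw [← powerset_univ, Fin.univ_succ, cons_eq_insert, sum_powerset_insert (by simp),
    sum_powerset_map, sum_powerset_map, powerset_univ]
  rfl

theorem sum_fin_sub_succ_mul_ite (q : ℕ → ℝ) (A B : ℝ) {ℓ N : ℕ} (h : ℓ ≤ N) :
    ∑ k : Fin N, (q k - q (k + 1)) * (if ℓ ≤ (k : ℕ) then A else B)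
      = (q ℓ - q N) * A + (q 0 - q ℓ) * B := by
  rw [Fin.sum_univ_eq_sum_range (fun k => (q k - q (k + 1)) * (if ℓ ≤ k then A else B))]
  induction N, h using Nat.le_induction with
  | base =>
    rw [sum_congr rfl fun k hk => by rw [if_neg (by simpa using hk)], ← sum_mul,
      sum_range_sub']
    ring
  | succ N hN ih =>
    rw [sum_range_succ, ih, if_pos hN]
    ring

section ProductWeights

variable {n : ℕ}

theorem prodWeight_eq_prod_ite (p : Fin n → ℝ) (s : Finset (Fin n)) :
    prodWeight p s = ∏ j, if j ∈ s then p j else 1 - p j := by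
  rw [prodWeight, prod_ite, compl_eq_univ_sdiff, sdiff_eq_filter, filter_mem_eq_inter,
    univ_inter]

theorem prodWeight_pos {p : Fin n → ℝ} (hp : ∀ j, 0 < p j ∧ p j < 1) (s : Finset (Fin n)) :
    0 < prodWeight p s := by
  rw [prodWeight_eq_prod_ite]
  exact prod_pos fun j _ => by split_ifs <;> linarith [hp j]

theorem prodWeight_map_succ (p : Fin (n + 1) → ℝ) (s : Finset (Fin n)) :
    prodWeight p (s.map (Fin.succEmb n)) = (1 - p 0) * prodWeight (Fin.tail p) s := by
  simp [prodWeight_eq_prod_ite, Fin.prod_univ_succ, Fin.tail]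

theorem prodWeight_insert_zero_map_succ (p : Fin (n + 1) → ℝ) (s : Finset (Fin n)) :
    prodWeight p (insert 0 (s.map (Fin.succEmb n))) = p 0 * prodWeight (Fin.tail p) s := by
  simp [prodWeight_eq_prod_ite, Fin.prod_univ_succ, Fin.tail]

def cardMass (p : Fin n → ℝ) (ℓ : ℕ) : ℝ :=
  ∑ u ∈ univ.filter (fun u : Finset (Fin n) => u.card = ℓ), prodWeight p u

theorem condWeight_eq (p : Fin n → ℝ) (ℓ : ℕ) (s : Finset (Fin n)) :
    condWeight p ℓ s = (if s.card = ℓ then prodWeight p s else 0) / cardMass p ℓ :=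
  rfl

theorem cardMass_pos {p : Fin n → ℝ} (hp : ∀ j, 0 < p j ∧ p j < 1) {ℓ : ℕ} (hℓ : ℓ ≤ n) :
    0 < cardMass p ℓ := by
  refine sum_pos (fun u _ => prodWeight_pos hp u) ?_
  obtain ⟨u, -, hu⟩ := exists_subset_card_eq (s := (univ : Finset (Fin n))) (by simpa using hℓ)
  exact ⟨u, by simpa using hu⟩

theorem cardMass_eq_zero (p : Fin n → ℝ) {ℓ : ℕ} (hℓ : n < ℓ) : cardMass p ℓ = 0 := by
  refine sum_eq_zero fun u hu => absurd (card_le_univ u) ?_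
  simp only [mem_filter] at hu
  simpa [hu.2] using hℓ

theorem cardMass_zero (p : Fin (n + 1) → ℝ) :
    cardMass p 0 = (1 - p 0) * cardMass (Fin.tail p) 0 := by
  simp only [cardMass, sum_filter]
  rw [sum_finset_fin_succ]
  simp [prodWeight_map_succ]

theorem cardMass_succ (p : Fin (n + 1) → ℝ) (ℓ : ℕ) :
    cardMass p (ℓ + 1)
      = (1 - p 0) * cardMass (Fin.tail p) (ℓ + 1) + p 0 * cardMass (Fin.tail p) ℓ := by
  simp only [cardMass, sum_filter]
  rw [sum_finset_fin_succ]
  simp [prodWeight_map_succ, prodWeight_insert_zero_map_succ, mul_sum]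

end ProductWeights

def IsLogConcave (x : ℕ → ℝ) : Prop :=
  ∀ k, x k * x (k + 2) ≤ x (k + 1) ^ 2

theorem IsLogConcave.convolve_pair {x y : ℕ → ℝ} {α β : ℝ} (hx : IsLogConcave x)
    (hx₀ : ∀ k, 0 ≤ x k) (hx_supp : ∀ k, x k = 0 → x (k + 1) = 0) (hα : 0 ≤ α) (hβ : 0 ≤ β)
    (hy₀ : y 0 = α * x 0) (hy : ∀ k, y (k + 1) = α * x (k + 1) + β * x k) :
    IsLogConcave y := by
  have hmid : ∀ k, x k * x (k + 3) ≤ x (k + 1) * x (k + 2) := by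
    intro k
    rcases (hx₀ (k + 1)).eq_or_lt with h1 | h1
    · rw [← h1, hx_supp _ (hx_supp _ h1.symm)]
      simp
    rcases (hx₀ (k + 2)).eq_or_lt with h2 | h2
    · rw [← h2, hx_supp _ h2.symm]
      simp
    have := mul_le_mul (hx k) (hx (k + 1)) (mul_nonneg (hx₀ _) (hx₀ _)) (sq_nonneg _)
    nlinarith [mul_pos h1 h2]
  intro k
  cases k with
  | zero =>
    rw [hy₀, hy, hy]
    nlinarith [mul_le_mul_of_nonneg_left (hx 0) (mul_nonneg hα hα),
      mul_nonneg (mul_nonneg hα hβ) (mul_nonneg (hx₀ 0) (hx₀ 1)),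
      mul_nonneg (mul_nonneg hβ hβ) (mul_nonneg (hx₀ 0) (hx₀ 0))]
  | succ k =>
    rw [hy, hy, hy]
    nlinarith [mul_le_mul_of_nonneg_left (hx (k + 1)) (mul_nonneg hα hα),
      mul_le_mul_of_nonneg_left (hx k) (mul_nonneg hβ hβ),
      mul_le_mul_of_nonneg_left (hmid k) (mul_nonneg hα hβ)]

section CardMass

variable {n : ℕ}

theorem cardMass_nonneg {p : Fin n → ℝ} (hp : ∀ j, 0 < p j ∧ p j < 1) (ℓ : ℕ) :
    0 ≤ cardMass p ℓ :=
  sum_nonneg fun u _ => (prodWeight_pos hp u).le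

theorem sum_condWeight {p : Fin n → ℝ} (hp : ∀ j, 0 < p j ∧ p j < 1) {ℓ : ℕ} (hℓ : ℓ ≤ n) :
    ∑ s, condWeight p ℓ s = 1 := by
  simp only [condWeight_eq, ← sum_div, ← sum_filter]
  exact div_self (cardMass_pos hp hℓ).ne'

theorem cardMass_isLogConcave {p : Fin n → ℝ} (hp : ∀ j, 0 < p j ∧ p j < 1) :
    IsLogConcave (cardMass p) := by
  induction n with
  | zero =>
    intro k
    rw [cardMass_eq_zero p (by omega : 0 < k + 2), mul_zero]
    exact sq_nonneg _
  | succ n ih =>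
    have htail : ∀ j, 0 < Fin.tail p j ∧ Fin.tail p j < 1 := fun j => hp j.succ
    refine (ih htail).convolve_pair (cardMass_nonneg htail) (fun k hk => ?_)
      (by linarith [hp 0]) (hp 0).1.le (cardMass_zero p) (cardMass_succ p)
    refine cardMass_eq_zero _ (lt_of_not_ge fun hkn => ?_)
    exact (cardMass_pos htail (by omega : k ≤ n)).ne' hk

noncomputable def zeroAbsentProb (p : Fin (n + 1) → ℝ) (ℓ : ℕ) : ℝ :=
  (1 - p 0) * cardMass (Fin.tail p) ℓ / cardMass p ℓ

theorem zeroAbsentProb_last (p : Fin (n + 1) → ℝ) : zeroAbsentProb p (n + 1) = 0 := by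
  rw [zeroAbsentProb, cardMass_eq_zero _ (Nat.lt_succ_self n), mul_zero, zero_div]

variable {p : Fin (n + 1) → ℝ} (hp : ∀ j, 0 < p j ∧ p j < 1)
include hp

theorem zeroAbsentProb_zero : zeroAbsentProb p 0 = 1 := by
  rw [zeroAbsentProb, ← cardMass_zero, div_self (cardMass_pos hp (Nat.zero_le _)).ne']

theorem zeroAbsentProb_succ_le (k : ℕ) : zeroAbsentProb p (k + 1) ≤ zeroAbsentProb p k := by
  have htail : ∀ j, 0 < Fin.tail p j ∧ Fin.tail p j < 1 := fun j => hp j.succ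
  have hp₀ := hp 0
  by_cases hk : n ≤ k
  · rw [zeroAbsentProb, cardMass_eq_zero _ (by omega : n < k + 1), mul_zero, zero_div]
    exact div_nonneg (mul_nonneg (by linarith) (cardMass_nonneg htail k)) (cardMass_nonneg hp k)
  rw [zeroAbsentProb, zeroAbsentProb, div_le_div_iff₀ (cardMass_pos hp (by omega))
    (cardMass_pos hp (by omega))]
  have key : cardMass (Fin.tail p) (k + 1) * cardMass p k
      ≤ cardMass (Fin.tail p) k * cardMass p (k + 1) := by
    cases k with
    | zero =>
      rw [cardMass_zero, cardMass_succ]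
      nlinarith [mul_nonneg hp₀.1.le (sq_nonneg (cardMass (Fin.tail p) 0))]
    | succ k =>
      rw [cardMass_succ, cardMass_succ]
      nlinarith [cardMass_isLogConcave htail k]
  rw [mul_assoc, mul_assoc]
  exact mul_le_mul_of_nonneg_left key (by linarith)

theorem condWeight_map_succ (ℓ : ℕ) (s : Finset (Fin n)) :
    condWeight p ℓ (s.map (Fin.succEmb n))
      = zeroAbsentProb p ℓ * condWeight (Fin.tail p) ℓ s := by
  rw [condWeight_eq, condWeight_eq, card_map, prodWeight_map_succ, zeroAbsentProb]
  split_ifs with h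
  · have := (cardMass_pos (p := Fin.tail p) (fun j => hp j.succ)
      (by simpa [h] using card_le_univ s)).ne'
    field_simp
  · simp

theorem condWeight_insert_zero_map_succ (ℓ : ℕ) (s : Finset (Fin n)) :
    condWeight p ℓ (insert 0 (s.map (Fin.succEmb n)))
      = (1 - zeroAbsentProb p ℓ) * condWeight (Fin.tail p) (ℓ - 1) s := by
  rw [condWeight_eq, condWeight_eq, card_insert_of_notMem (by simp), card_map,
    prodWeight_insert_zero_map_succ]
  cases ℓ with
  | zero => simp [zeroAbsentProb_zero hp]
  | succ ℓ =>
    simp only [Nat.add_sub_cancel, Nat.add_right_cancel_iff]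
    split_ifs with h
    · have h₁ := (cardMass_pos (p := Fin.tail p) (fun j => hp j.succ)
        (by simpa [h] using card_le_univ s)).ne'
      have h₂ := (cardMass_pos hp (by simpa [h] using card_le_univ s : ℓ + 1 ≤ n + 1)).ne'
      rw [cardMass_succ] at h₂
      rw [zeroAbsentProb, cardMass_succ]
      field_simp
      ring
    · simp

theorem sum_condWeight_mul (ℓ : ℕ) (g : Finset (Fin (n + 1)) → ℝ) :
    ∑ s, condWeight p ℓ s * g s
      = zeroAbsentProb p ℓ * ∑ s, condWeight (Fin.tail p) ℓ s * g (s.map (Fin.succEmb n))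
        + (1 - zeroAbsentProb p ℓ)
          * ∑ s, condWeight (Fin.tail p) (ℓ - 1) s * g (insert 0 (s.map (Fin.succEmb n))) := by
  simp only [sum_finset_fin_succ, condWeight_map_succ hp, condWeight_insert_zero_map_succ hp,
    mul_sum, mul_assoc]

end CardMass

section Ranks

variable {n m : ℕ}

def levelSet (ρ : Fin n → Fin m) (ℓ : ℕ) : Finset (Fin n) :=
  univ.filter fun j => (ρ j : ℕ) < ℓ

def insertRank (ρ : Fin n → Fin m) (k : Fin (m + 1)) : Fin (n + 1) → Fin (m + 1) :=
  Fin.cons k fun j => k.succAbove (ρ j)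

theorem mem_levelSet {ρ : Fin n → Fin m} {ℓ : ℕ} {j : Fin n} :
    j ∈ levelSet ρ ℓ ↔ (ρ j : ℕ) < ℓ := by
  simp [levelSet]

theorem levelSet_insertRank (ρ : Fin n → Fin m) (k : Fin (m + 1)) (ℓ : ℕ) :
    levelSet (insertRank ρ k) ℓ = if ℓ ≤ k then (levelSet ρ ℓ).map (Fin.succEmb n)
      else insert 0 ((levelSet ρ (ℓ - 1)).map (Fin.succEmb n)) := by
  ext j
  cases j using Fin.cases with
  | zero => split_ifs <;> simp [mem_levelSet, insertRank] <;> omega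
  | succ j =>
    simp only [mem_levelSet, insertRank, Fin.cons_succ, Fin.succAbove]
    split_ifs <;> simp [mem_levelSet, Fin.lt_def] at * <;> omega

theorem injective_insertRank {ρ : Fin n → Fin m} (hρ : Function.Injective ρ)
    (k : Fin (m + 1)) :
    Function.Injective (insertRank ρ k) :=
  Fin.cons_injective_iff.2
    ⟨fun ⟨j, hj⟩ => Fin.succAbove_ne k (ρ j) hj, Fin.succAbove_right_injective.comp hρ⟩

def IsMaximalChain (c : Fin (n + 1) → Finset (Fin n)) : Prop :=
  c 0 = ∅ ∧ c (Fin.last n) = Finset.univ ∧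
    (∀ i : Fin n, c i.castSucc ⊂ c i.succ) ∧ (∀ ℓ : Fin (n + 1), (c ℓ).card = (ℓ : ℕ))

theorem card_levelSet {ρ : Fin n → Fin n} (hρ : Function.Injective ρ) {ℓ : ℕ} (hℓ : ℓ ≤ n) :
    (levelSet ρ ℓ).card = ℓ := by
  calc (levelSet ρ ℓ).card = #{i : Fin n | (i : ℕ) < ℓ} := by
        refine card_nbij ρ (fun j hj => by simpa [mem_levelSet] using hj) hρ.injOn
          fun i hi => ?_
        obtain ⟨j, rfl⟩ := (Finite.injective_iff_bijective.1 hρ).2 i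
        exact ⟨j, by simpa [mem_levelSet] using hi, rfl⟩
    _ = ℓ := by rw [Fin.card_filter_val_lt, min_eq_right hℓ]

theorem isMaximalChain_levelSet {ρ : Fin n → Fin n} (hρ : Function.Injective ρ) :
    IsMaximalChain fun ℓ : Fin (n + 1) => levelSet ρ ℓ := by
  refine ⟨by ext; simp [mem_levelSet], by ext; simp [mem_levelSet], fun i => ?_,
    fun ℓ => card_levelSet hρ (Nat.lt_succ_iff.1 ℓ.isLt)⟩
  refine ssubset_of_subset_of_ne (fun j hj => ?_) fun h => ?_
  · simp only [mem_levelSet, Fin.val_castSucc, Fin.val_succ] at hj ⊢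
    omega
  · have := congrArg card h
    simp only [Fin.val_castSucc, Fin.val_succ] at this
    rw [card_levelSet hρ i.isLt.le, card_levelSet hρ i.isLt] at this
    omega

end Ranks

/-- `ρ j` is the position of `j` in a random ordering of `Fin n` drawn with weights `ν`, so that
`levelSet ρ ℓ` is the set of its first `ℓ` elements. -/
structure IsRankLaw {n : ℕ} (p : Fin n → ℝ) (ν : (Fin n → Fin n) → ℝ) : Prop where
  nonneg : ∀ ρ, 0 ≤ ν ρ
  injective_of_ne_zero : ∀ ρ, ν ρ ≠ 0 → Function.Injective ρ
  sum_mul_levelSet : ∀ ℓ ≤ n, ∀ g : Finset (Fin n) → ℝ,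
    ∑ ρ, ν ρ * g (levelSet ρ ℓ) = ∑ s, condWeight p ℓ s * g s

theorem isRankLaw_fin_zero (p : Fin 0 → ℝ) : IsRankLaw p fun _ => 1 where
  nonneg _ := zero_le_one
  injective_of_ne_zero ρ _ := Function.injective_of_subsingleton ρ
  sum_mul_levelSet ℓ hℓ g := by
    obtain rfl : ℓ = 0 := Nat.le_zero.1 hℓ
    rw [Fintype.sum_subsingleton (fun s : Finset (Fin 0) => condWeight p 0 s * g s) ∅]
    simp only [condWeight, card_eq_zero, filter_eq', mem_univ, if_true, sum_singleton]
    simp [prodWeight, levelSet]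

theorem IsRankLaw.insertRank {n : ℕ} {p : Fin (n + 1) → ℝ} (hp : ∀ j, 0 < p j ∧ p j < 1)
    {ν : (Fin n → Fin n) → ℝ} (hν : IsRankLaw (Fin.tail p) ν) :
    IsRankLaw p (pushforward (fun x : (Fin n → Fin n) × Fin (n + 1) => insertRank x.1 x.2)
      fun x => ν x.1 * (zeroAbsentProb p x.2 - zeroAbsentProb p (x.2 + 1))) where
  nonneg := pushforward_nonneg fun x =>
    mul_nonneg (hν.nonneg _) (sub_nonneg.2 (zeroAbsentProb_succ_le hp _))
  injective_of_ne_zero τ hτ := by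
    obtain ⟨⟨ρ, k⟩, rfl, hne⟩ := exists_of_pushforward_ne_zero hτ
    exact injective_insertRank (hν.injective_of_ne_zero ρ (left_ne_zero_of_mul hne)) k
  sum_mul_levelSet ℓ hℓ g := by
    set q := zeroAbsentProb p
    set A := ∑ ρ, ν ρ * g ((levelSet ρ ℓ).map (Fin.succEmb n))
    set B := ∑ ρ, ν ρ * g (insert 0 ((levelSet ρ (ℓ - 1)).map (Fin.succEmb n)))
    have hA : q ℓ * A
        = q ℓ * ∑ s, condWeight (Fin.tail p) ℓ s * g (s.map (Fin.succEmb n)) := by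
      rcases hℓ.lt_or_eq with hℓ | rfl
      · exact congrArg _
          (hν.sum_mul_levelSet ℓ (by omega) fun s => g (s.map (Fin.succEmb n)))
      · simp [q, zeroAbsentProb_last]
    have hB : (1 - q ℓ) * B = (1 - q ℓ)
        * ∑ s, condWeight (Fin.tail p) (ℓ - 1) s * g (insert 0 (s.map (Fin.succEmb n))) := by
      rcases Nat.eq_zero_or_pos ℓ with rfl | hℓ₀
      · simp [q, zeroAbsentProb_zero hp]
      · exact congrArg _ (hν.sum_mul_levelSet (ℓ - 1) (by omega)
          fun s => g (insert 0 (s.map (Fin.succEmb n))))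
    calc ∑ τ, _ * g (levelSet τ ℓ)
        = ∑ k : Fin (n + 1), (q k - q (k + 1)) * if ℓ ≤ k then A else B := by
          rw [sum_pushforward_mul, Fintype.sum_prod_type_right]
          refine sum_congr rfl fun k _ => ?_
          split_ifs with h <;> rw [mul_sum] <;> refine sum_congr rfl fun ρ _ => ?_ <;>
            simp only [levelSet_insertRank, h, if_true, if_false] <;> ring
      _ = q ℓ * A + (1 - q ℓ) * B := by
          rw [sum_fin_sub_succ_mul_ite q A B hℓ,
            show q (n + 1) = 0 from zeroAbsentProb_last p, show q 0 = 1 from zeroAbsentProb_zero hp]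
          ring
      _ = ∑ s, condWeight p ℓ s * g s := by rw [hA, hB, sum_condWeight_mul hp]

theorem exists_isRankLaw {n : ℕ} (p : Fin n → ℝ) (hp : ∀ j, 0 < p j ∧ p j < 1) :
    ∃ ν, IsRankLaw p ν := by
  induction n with
  | zero => exact ⟨_, isRankLaw_fin_zero p⟩
  | succ n ih =>
    obtain ⟨ν, hν⟩ := ih (Fin.tail p) fun j => hp j.succ
    exact ⟨_, hν.insertRank hp⟩

theorem IsRankLaw.sum_eq_one {n : ℕ} {p : Fin n → ℝ} (hp : ∀ j, 0 < p j ∧ p j < 1)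
    {ν : (Fin n → Fin n) → ℝ} (hν : IsRankLaw p ν) : ∑ ρ, ν ρ = 1 := by
  simpa [sum_condWeight hp (Nat.zero_le n)] using hν.sum_mul_levelSet 0 (Nat.zero_le n) 1

/-- **Coupled sampling of a maximal chain.**  For a non-trivial product distribution
`P` on `{0,1}^n` there is a probability distribution `μ` on maximal chains
`∅ = c_0 ⊂ c_1 ⊂ ⋯ ⊂ c_n = [n]` (with `|c_ℓ| = ℓ`) whose `ℓ`-th marginal is `P_ℓ`,
the distribution of `z ∼ P` conditioned on `|z| = ℓ`, for every `ℓ`. -/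
theorem exists_chain_distribution (n : ℕ) (p : Fin n → ℝ)
    (hp : ∀ j, 0 < p j ∧ p j < 1) :
    ∃ μ : (Fin (n + 1) → Finset (Fin n)) → ℝ,
      (∀ c, 0 ≤ μ c) ∧
      (∑ c, μ c = 1) ∧
      (∀ c, μ c ≠ 0 →
        c 0 = ∅ ∧ c (Fin.last n) = Finset.univ ∧
        (∀ i : Fin n, c i.castSucc ⊂ c i.succ) ∧
        (∀ ℓ : Fin (n + 1), (c ℓ).card = (ℓ : ℕ))) ∧
      (∀ (ℓ : Fin (n + 1)) (s : Finset (Fin n)),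
        ∑ c ∈ Finset.univ.filter (fun c : Fin (n + 1) → Finset (Fin n) => c ℓ = s), μ c
          = condWeight p (ℓ : ℕ) s) := by
  obtain ⟨ν, hν⟩ := exists_isRankLaw p hp
  let chain (ρ : Fin n → Fin n) (ℓ : Fin (n + 1)) : Finset (Fin n) := levelSet ρ ℓ
  refine ⟨pushforward chain ν, pushforward_nonneg hν.nonneg, ?_, fun c hc => ?_,
    fun ℓ s => ?_⟩
  · simpa [hν.sum_eq_one hp] using sum_pushforward_mul chain ν 1
  · obtain ⟨ρ, rfl, hne⟩ := exists_of_pushforward_ne_zero hc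
    exact isMaximalChain_levelSet (hν.injective_of_ne_zero ρ hne)
  · have := sum_pushforward_mul chain ν fun c => if c ℓ = s then 1 else 0
    rw [hν.sum_mul_levelSet ℓ (Nat.lt_succ_iff.1 ℓ.isLt) fun t => if t = s then 1 else 0]
      at this
    simpa [sum_filter] using this
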